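/- arXiv:2205.03015 — 2 statements merged into one kernel-verified Lean document; each statement's English description precedes it below -/
import Mathlib

section
/- Let [a,b] be a box in R^n (n >= 1) with side lengths d_j = b_j - a_j and measure delta = ||b - a||, and suppose it is bisected along a coordinate br of maximal side length, i.e., d_br = max_j d_j. Then the measure delta' of each child box satisfies delta'^2 <= (1 - 3/(4n)) * delta^2. -/
/-- Bisecting along a longest side contracts the squared measure by the factor
`1 - 3/(4n)`. -/
theorem stmt_8 {n : ℕ} (hn : 1 ≤ n) (a b : EuclideanSpace ℝ (Fin n)) (br : Fin n)
    (hab : ∀ j, a j ≤ b j)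
    (d : EuclideanSpace ℝ (Fin n)) (hd : ∀ j, d j = b j - a j)
    (hmax : ∀ j, d j ≤ d br)
    (d' : EuclideanSpace ℝ (Fin n))
    (hd' : ∀ j, d' j = if j = br then d br / 2 else d j)
    (δ δ' : ℝ) (hδ : δ = ‖d‖) (hδ' : δ' = ‖d'‖) :
    δ' ^ 2 ≤ (1 - 3 / (4 * (n : ℝ))) * δ ^ 2 := by
  have hn' : (0:ℝ) < n := by exact_mod_cast hn
  have hdnn : ∀ j, 0 ≤ d j := fun j => by rw [hd j]; linarith [hab j]
  have hsq : δ ^ 2 = ∑ j, d j ^ 2 := by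
    rw [hδ, EuclideanSpace.norm_eq, Real.sq_sqrt (Finset.sum_nonneg fun j _ => sq_nonneg _)]
    simp [Real.norm_eq_abs, sq_abs]
  have hsq' : δ' ^ 2 = ∑ j, d' j ^ 2 := by
    rw [hδ', EuclideanSpace.norm_eq, Real.sq_sqrt (Finset.sum_nonneg fun j _ => sq_nonneg _)]
    simp [Real.norm_eq_abs, sq_abs]
  have key : δ' ^ 2 = δ ^ 2 - 3/4 * d br ^ 2 := by
    rw [hsq, hsq']
    rw [← Finset.add_sum_erase _ _ (Finset.mem_univ br),
        ← Finset.add_sum_erase _ (fun j => d j ^ 2) (Finset.mem_univ br)]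
    have : ∑ j ∈ Finset.univ.erase br, d' j ^ 2 = ∑ j ∈ Finset.univ.erase br, d j ^ 2 := by
      refine Finset.sum_congr rfl fun j hj => ?_
      rw [hd' j, if_neg (Finset.ne_of_mem_erase hj)]
    rw [this, hd' br, if_pos rfl]
    ring
  have hbound : δ ^ 2 ≤ n * d br ^ 2 := by
    rw [hsq]
    calc ∑ j, d j ^ 2 ≤ ∑ _j : Fin n, d br ^ 2 :=
          Finset.sum_le_sum fun j _ => pow_le_pow_left₀ (hdnn j) (hmax j) 2
      _ = n * d br ^ 2 := by simp [Finset.sum_const, Finset.card_univ]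
  rw [key]
  have : 3 / (4 * (n:ℝ)) * δ ^ 2 ≤ 3/4 * d br ^ 2 := by
    rw [div_mul_eq_mul_div, div_le_iff₀ (by positivity)]
    nlinarith
  nlinarith
end

section
/- Let I be a nonempty finite index set, and for each i in I let F_i be a real number and delta_i > 0 a positive real. Suppose h in I is such that delta_h = max_{i in I} delta_i and F_h <= F_i for every i in I with delta_i = delta_h. Then for any real numbers fmin and tau, there exists L > 0 such that for all i in I, F_h - L*delta_h <= F_i - L*delta_i, and F_h - L*delta_h <= fmin - tau. -/
/-- A hyper-rectangle of maximal measure with smallest aggregated value among those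
of maximal measure is potentially optimal for a sufficiently large constant `L`. -/
theorem stmt_11 {ι : Type*} (I : Finset ι) (hne : I.Nonempty) (F δ : ι → ℝ)
    (hδpos : ∀ i ∈ I, 0 < δ i) (h : ι) (hh : h ∈ I)
    (hmax : ∀ i ∈ I, δ i ≤ δ h)
    (hmin : ∀ i ∈ I, δ i = δ h → F h ≤ F i)
    (fmin tau : ℝ) :
    ∃ L > (0 : ℝ), (∀ i ∈ I, F h - L * δ h ≤ F i - L * δ i) ∧
      F h - L * δ h ≤ fmin - tau := by
  have hδh : 0 < δ h := hδpos h hh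
  set g : ι → ℝ := fun i => (F h - F i) / (δ h - δ i) with hg
  set L : ℝ := max 1 (max (I.sup' hne g) ((F h - fmin + tau) / δ h)) with hL
  refine ⟨L, lt_of_lt_of_le one_pos (le_max_left _ _), ?_, ?_⟩
  · intro i hi
    rcases eq_or_lt_of_le (hmax i hi) with heq | hlt
    · have := hmin i hi heq
      rw [heq]; linarith
    · have hgle : g i ≤ L :=
        le_trans (Finset.le_sup' g hi) (le_trans (le_max_left _ _) (le_max_right _ _))
      have hpos : 0 < δ h - δ i := by linarith
      have := (div_le_iff₀ hpos).mp hgle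
      nlinarith
  · have hgle : (F h - fmin + tau) / δ h ≤ L :=
      le_trans (le_max_right _ _) (le_max_right _ _)
    have := (div_le_iff₀ hδh).mp hgle
    nlinarith
end
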